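/- For the A_n singularity R = k[[x, y, x^{-1}y^{n+1}]] (k of characteristic p > 0, n ≥ 1) with maximal monomial ideal m, and 0 < s ≤ 1, the volume of the region σ^∨ \ (s·Hull m ∪ (Exp m + σ^∨)) in ℝ² equals s², where σ^∨ = cone((1,0),(−1,n+1)). -/

import Mathlib

/-!
Every nonzero lattice point `(a, b)` of `σ^∨` satisfies `a + b ≥ 1` and `n a + b ≥ 1`, and the
lattice points `(1,0)`, `(0,1)`, `(-1,n+1)` lie on these two lines. Since `Exp m` is stable under
adding the generators of `σ^∨`, its hull is stable under adding `σ^∨`, so `Hull m` is exactly the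
region `N` cut out of `σ^∨` by the two inequalities. For `s ≤ 1` we have `Exp m + σ^∨ ⊆ N ⊆ s • N`,
so the region in question is `σ^∨ \ s • N`; its vertical slice over `x` has length `s - |x|`,
which integrates to `s²`.
-/

open Set Pointwise MeasureTheory

theorem integral_sub_abs_eq_sq {s : ℝ} (hs : 0 ≤ s) : ∫ x in -s..s, (s - |x|) = s ^ 2 := by
  have hc : Continuous fun x : ℝ => s - |x| := by fun_prop
  have half : ∫ x in (0 : ℝ)..s, (s - |x|) = s ^ 2 / 2 := by
    rw [intervalIntegral.integral_congr (g := fun x => s - x) fun x hx => by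
      rw [uIcc_of_le hs] at hx; simp [abs_of_nonneg hx.1]]
    rw [intervalIntegral.integral_sub intervalIntegrable_const
      intervalIntegral.intervalIntegrable_id, intervalIntegral.integral_const, integral_id]
    simp only [sub_zero, smul_eq_mul]
    ring
  rw [← intervalIntegral.integral_add_adjacent_intervals (b := 0) (hc.intervalIntegrable _ _)
    (hc.intervalIntegrable _ _), ← neg_zero, ← intervalIntegral.integral_comp_neg]
  simp only [abs_neg, neg_zero, half]
  ring

theorem lintegral_ofReal_sub_abs {s : ℝ} (hs : 0 ≤ s) :
    ∫⁻ x, ENNReal.ofReal (s - |x|) = ENNReal.ofReal (s ^ 2) := by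
  have hsupp : (Function.support fun x => ENNReal.ofReal (s - |x|)) ⊆ Ioc (-s) s := by
    intro x hx
    rw [Function.mem_support, ENNReal.ofReal_ne_zero_iff, sub_pos, abs_lt] at hx
    exact ⟨hx.1, hx.2.le⟩
  have hnonneg : 0 ≤ᵐ[volume.restrict (Ioc (-s) s)] fun x => s - |x| :=
    (ae_restrict_iff' measurableSet_Ioc).2 <| .of_forall fun x hx =>
      sub_nonneg.2 (abs_le.2 ⟨hx.1.le, hx.2⟩)
  rw [← setLIntegral_eq_of_support_subset hsupp, ← ofReal_integral_eq_lintegral_ofReal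
    ((by fun_prop : Continuous fun x : ℝ => s - |x|).integrableOn_Ioc) hnonneg,
    ← intervalIntegral.integral_of_le (by linarith), integral_sub_abs_eq_sq hs]

theorem add_smul_mem_convexHull {E : Type*} [AddCommGroup E] [Module ℝ E] {S : Set E} {e : E}
    (hS : ∀ v ∈ S, v + e ∈ S) {x : E} (hx : x ∈ convexHull ℝ S) {t : ℝ} (ht : 0 ≤ t) :
    x + t • e ∈ convexHull ℝ S := by
  have hnat : ∀ v ∈ S, ∀ k : ℕ, v + (k : ℝ) • e ∈ S := by
    intro v hv k
    induction k with
    | zero => simpa using hv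
    | succ k ih => simpa [add_smul, ← add_assoc] using hS _ ih
  suffices S ⊆ (fun x => x + t • e) ⁻¹' convexHull ℝ S from
    convexHull_min this ((convex_convexHull ℝ S).translate_preimage_left _) hx
  intro v hv
  obtain ⟨k, hk⟩ := exists_nat_gt t
  have hk0 : (0 : ℝ) < k := ht.trans_lt hk
  -- `v + t • e` lies on the segment from `v` to `v + k • e`
  have := (convex_convexHull ℝ S).add_smul_sub_mem (subset_convexHull ℝ S hv)
    (subset_convexHull ℝ S (hnat v hv k)) ⟨div_nonneg ht hk0.le, (div_le_one hk0).2 hk.le⟩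
  simpa [smul_smul, div_mul_cancel₀ t hk0.ne'] using this

namespace AnSingularity

def dualCone (n : ℝ) : Set (ℝ × ℝ) := {p | 0 ≤ p.2 ∧ 0 ≤ (n + 1) * p.1 + p.2}

def latticePoints (n : ℝ) : Set (ℝ × ℝ) :=
  {v | v ∈ dualCone n ∧ (∃ z₁ z₂ : ℤ, v = ((z₁ : ℝ), (z₂ : ℝ))) ∧ v ≠ 0}

def newtonRegion (n t : ℝ) : Set (ℝ × ℝ) :=
  {p | p ∈ dualCone n ∧ t ≤ p.1 + p.2 ∧ t ≤ n * p.1 + p.2}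

theorem cone_eq_dualCone {n : ℝ} (hn : -1 < n) :
    {x : ℝ × ℝ | ∃ a b : ℝ, 0 ≤ a ∧ 0 ≤ b ∧ x = a • ((1 : ℝ), (0 : ℝ)) + b • ((-1 : ℝ), n + 1)} =
      dualCone n := by
  have hn1 : 0 < n + 1 := by linarith
  ext ⟨x, y⟩
  simp only [dualCone, mem_ofPred_eq, Prod.smul_mk, Prod.mk_add_mk, smul_eq_mul, Prod.mk.injEq]
  constructor
  · rintro ⟨a, b, ha, hb, rfl, rfl⟩
    constructor <;> nlinarith
  · rintro ⟨hy, hxy⟩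
    refine ⟨((n + 1) * x + y) / (n + 1), y / (n + 1), by positivity, by positivity, ?_, ?_⟩ <;>
      field_simp <;> ring

theorem add_mem_newtonRegion {n t : ℝ} (hn : 0 ≤ n) {p q : ℝ × ℝ} (hp : p ∈ newtonRegion n t)
    (hq : q ∈ dualCone n) : p + q ∈ newtonRegion n t := by
  obtain ⟨⟨hp₁, hp₂⟩, hp₃, hp₄⟩ := hp
  obtain ⟨hq₁, hq₂⟩ := hq
  simp only [newtonRegion, dualCone, mem_ofPred_eq, Prod.fst_add, Prod.snd_add]
  refine ⟨⟨by linarith, by linarith⟩, ?_, ?_⟩ <;> nlinarith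

theorem convex_newtonRegion (n t : ℝ) : Convex ℝ (newtonRegion n t) := by
  rintro p ⟨⟨hp₁, hp₂⟩, hp₃, hp₄⟩ q ⟨⟨hq₁, hq₂⟩, hq₃, hq₄⟩ a b ha hb hab
  simp only [newtonRegion, dualCone, mem_ofPred_eq, Prod.fst_add, Prod.snd_add, Prod.smul_fst,
    Prod.smul_snd, smul_eq_mul]
  refine ⟨⟨by positivity, by nlinarith⟩, by nlinarith, by nlinarith⟩

theorem smul_mem_newtonRegion {n t c : ℝ} (hc : 0 ≤ c) {p : ℝ × ℝ} (hp : p ∈ newtonRegion n t) :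
    c • p ∈ newtonRegion n (c * t) := by
  obtain ⟨⟨hp₁, hp₂⟩, hp₃, hp₄⟩ := hp
  simp only [newtonRegion, dualCone, mem_ofPred_eq, Prod.smul_fst, Prod.smul_snd, smul_eq_mul]
  refine ⟨⟨by positivity, by nlinarith⟩, by nlinarith, by nlinarith⟩

theorem smul_newtonRegion {n s : ℝ} (hs : 0 < s) : s • newtonRegion n 1 = newtonRegion n s := by
  refine Subset.antisymm ?_ fun p hp => ?_
  · rintro _ ⟨p, hp, rfl⟩
    simpa using smul_mem_newtonRegion hs.le hp
  · rw [mem_smul_set_iff_inv_smul_mem₀ hs.ne']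
    simpa [hs.ne'] using smul_mem_newtonRegion (inv_nonneg.2 hs.le) hp

theorem latticePoints_subset_newtonRegion {n : ℝ} (hn : 1 ≤ n) :
    latticePoints n ⊆ newtonRegion n 1 := by
  rintro _ ⟨hv, ⟨a, b, rfl⟩, hne⟩
  refine ⟨hv, ?_⟩
  obtain ⟨hb, hab⟩ := hv
  simp only at hb hab ⊢
  have hb' : (0 : ℤ) ≤ b := mod_cast hb
  rcases lt_trichotomy a 0 with ha | rfl | ha
  · have ha' : (a : ℝ) ≤ -1 := mod_cast Int.le_sub_one_of_lt ha
    constructor <;> nlinarith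
  · have : (1 : ℝ) ≤ b := by
      have : b ≠ 0 := by rintro rfl; simp at hne
      exact_mod_cast (show 1 ≤ b by omega)
    simp [this]
  · have ha' : (1 : ℝ) ≤ a := mod_cast ha
    constructor <;> nlinarith

theorem one_zero_mem_latticePoints {n : ℝ} (hn : -1 < n) : ((1 : ℝ), (0 : ℝ)) ∈ latticePoints n :=
  ⟨⟨le_rfl, by linarith⟩, ⟨1, 0, by simp⟩, by simp⟩

theorem zero_one_mem_latticePoints (n : ℝ) : ((0 : ℝ), (1 : ℝ)) ∈ latticePoints n :=
  ⟨⟨zero_le_one, by linarith⟩, ⟨0, 1, by simp⟩, by simp⟩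

theorem neg_one_mem_latticePoints (n : ℕ) : ((-1 : ℝ), (n : ℝ) + 1) ∈ latticePoints n :=
  ⟨⟨by positivity, by linarith⟩, ⟨-1, n + 1, by simp⟩, by simp⟩

theorem add_mem_latticePoints {n : ℝ} (hn : -1 < n) {v w : ℝ × ℝ} (hv : v ∈ latticePoints n)
    (hw : w ∈ latticePoints n) : v + w ∈ latticePoints n := by
  obtain ⟨⟨hv₁, hv₂⟩, ⟨a, b, rfl⟩, hv0⟩ := hv
  obtain ⟨⟨hw₁, hw₂⟩, ⟨c, d, rfl⟩, -⟩ := hw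
  simp only at hv₁ hv₂ hw₁ hw₂
  refine ⟨⟨add_nonneg hv₁ hw₁, ?_⟩, ⟨a + c, b + d, by simp⟩, fun h => hv0 ?_⟩
  · show 0 ≤ (n + 1) * ((a : ℝ) + c) + (b + d)
    linarith
  simp only [Prod.mk_add_mk, Prod.mk_eq_zero] at h ⊢
  have hb : (b : ℝ) = 0 := by linarith
  have ha : (n + 1) * (a : ℝ) = 0 := by nlinarith
  exact ⟨(mul_eq_zero.1 ha).resolve_left (by linarith), hb⟩

theorem add_mem_convexHull_latticePoints {n : ℕ} {x p : ℝ × ℝ}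
    (hx : x ∈ convexHull ℝ (latticePoints n)) (hp : p ∈ dualCone n) :
    x + p ∈ convexHull ℝ (latticePoints n) := by
  have hn : (-1 : ℝ) < n := by linarith [n.cast_nonneg (α := ℝ)]
  rw [← cone_eq_dualCone hn] at hp
  obtain ⟨a, b, ha, hb, rfl⟩ := hp
  have e₁ := one_zero_mem_latticePoints hn
  have e₂ := neg_one_mem_latticePoints n
  rw [← add_assoc]
  exact add_smul_mem_convexHull (fun v hv => add_mem_latticePoints hn hv e₂)
    (add_smul_mem_convexHull (fun v hv => add_mem_latticePoints hn hv e₁) hx ha) hb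

theorem newtonRegion_subset_convexHull {n : ℕ} (hn : 1 ≤ n) :
    newtonRegion n 1 ⊆ convexHull ℝ (latticePoints n) := by
  have hn' : (1 : ℝ) ≤ n := mod_cast hn
  have hull := convex_convexHull ℝ (latticePoints (n : ℝ))
  have e₁ := subset_convexHull ℝ _ (one_zero_mem_latticePoints (by linarith : (-1 : ℝ) < n))
  have e₀ := subset_convexHull ℝ _ (zero_one_mem_latticePoints n)
  have e₂ := subset_convexHull ℝ _ (neg_one_mem_latticePoints n)
  rintro ⟨x, y⟩ ⟨⟨hy, hxy⟩, h₁, h₂⟩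
  simp only at hy hxy h₁ h₂
  -- split `(x, y)` as a point of the boundary polygon `(1,0) – (0,1) – (-1,n+1)` plus a cone vector
  suffices ∃ c ∈ convexHull ℝ (latticePoints n), (x, y) - c ∈ dualCone n by
    obtain ⟨c, hc, hqc⟩ := this
    simpa using add_mem_convexHull_latticePoints hc hqc
  rcases le_total y 1 with hy₁ | hy₁
  · refine ⟨(1 - y, y), ?_, ?_⟩
    · convert hull.add_smul_sub_mem e₁ e₀ ⟨hy, hy₁⟩ using 1
      ext <;> simp [sub_eq_add_neg]
    · show 0 ≤ y - y ∧ 0 ≤ (n + 1) * (x - (1 - y)) + (y - y)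
      constructor <;> nlinarith
  rcases le_total y (n + 1) with hy₂ | hy₂
  · have hn0 : (0 : ℝ) < n := by positivity
    refine ⟨(-((y - 1) / n), y), ?_, ?_⟩
    · convert hull.add_smul_sub_mem e₀ e₂ (t := (y - 1) / n) ⟨by positivity, ?_⟩ using 1
      · ext <;> simp [div_mul_cancel₀ _ hn0.ne']
      · rw [div_le_one hn0]; linarith
    · show 0 ≤ y - y ∧ 0 ≤ (n + 1) * (x - -((y - 1) / n)) + (y - y)
      have hx : 0 ≤ x + (y - 1) / n := by
        rw [← mul_nonneg_iff_of_pos_left hn0]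
        field_simp
        linarith
      constructor <;> nlinarith
  · refine ⟨_, e₂, ?_⟩
    show 0 ≤ y - (n + 1) ∧ 0 ≤ (n + 1) * (x - -1) + (y - (n + 1))
    constructor <;> linarith

theorem newtonRegion_anti (n : ℝ) : Antitone (newtonRegion n) :=
  fun _ _ h _ ⟨hp, h₁, h₂⟩ => ⟨hp, h.trans h₁, h.trans h₂⟩

theorem convexHull_latticePoints {n : ℕ} (hn : 1 ≤ n) :
    convexHull ℝ (latticePoints n) = newtonRegion n 1 :=
  (convexHull_min (latticePoints_subset_newtonRegion (mod_cast hn))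
    (convex_newtonRegion _ _)).antisymm (newtonRegion_subset_convexHull hn)

theorem isClosed_dualCone (n : ℝ) : IsClosed (dualCone n) :=
  (isClosed_le continuous_const continuous_snd).inter
    (isClosed_le (f := fun _ => 0) (g := fun p : ℝ × ℝ => (n + 1) * p.1 + p.2) continuous_const
      (by fun_prop))

theorem isClosed_newtonRegion (n t : ℝ) : IsClosed (newtonRegion n t) :=
  (isClosed_dualCone n).inter <| (isClosed_le (f := fun _ => t) (g := fun p : ℝ × ℝ => p.1 + p.2)
    continuous_const (by fun_prop)).inter
    (isClosed_le (f := fun _ => t) (g := fun p : ℝ × ℝ => n * p.1 + p.2) continuous_const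
      (by fun_prop))

theorem volume_dualCone_diff_newtonRegion {n s : ℝ} (hn : 1 ≤ n) (hs : 0 ≤ s) :
    volume (dualCone n \ newtonRegion n s) = ENNReal.ofReal (s ^ 2) := by
  have hslice : ∀ x : ℝ, Prod.mk x ⁻¹' (dualCone n \ newtonRegion n s) =
      Ico (max 0 (-(n + 1) * x)) (max (s - x) (s - n * x)) := by
    intro x
    ext y
    simp only [newtonRegion, dualCone, mem_preimage, mem_sdiff, mem_ofPred_eq, mem_Ico, max_le_iff,
      lt_max_iff, not_and_or, not_le]
    grind
  have hlength : ∀ x : ℝ, max (s - x) (s - n * x) - max 0 (-(n + 1) * x) = s - |x| := by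
    intro x
    rcases le_total 0 x with h | h
    · rw [abs_of_nonneg h, max_eq_left (by nlinarith), max_eq_left (by nlinarith)]
      ring
    · rw [abs_of_nonpos h, max_eq_right (by nlinarith), max_eq_right (by nlinarith)]
      ring
  rw [Measure.volume_eq_prod, Measure.prod_apply
    ((isClosed_dualCone n).measurableSet.diff (isClosed_newtonRegion n s).measurableSet)]
  simp only [hslice, Real.volume_Ico, hlength]
  exact lintegral_ofReal_sub_abs hs

theorem dualCone_diff_eq {n : ℕ} (hn : 1 ≤ n) {s : ℝ} (h0 : 0 < s) (h1 : s ≤ 1) :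
    dualCone n \ (s • convexHull ℝ (latticePoints n) ∪ (latticePoints n + dualCone n)) =
      dualCone n \ newtonRegion n s := by
  rw [convexHull_latticePoints hn, smul_newtonRegion h0, union_eq_left.2]
  rintro _ ⟨v, hv, p, hp, rfl⟩
  exact add_mem_newtonRegion n.cast_nonneg
    (newtonRegion_anti _ h1 (latticePoints_subset_newtonRegion (mod_cast hn) hv)) hp

end AnSingularity

open AnSingularity in
theorem An_volume_small_s (n : ℕ) (hn : 1 ≤ n) (s : ℝ) (h0 : 0 < s) (h1 : s ≤ 1)
    (σ Expm Hullm : Set (ℝ × ℝ))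
    (hσ : σ = {x | ∃ a b : ℝ, 0 ≤ a ∧ 0 ≤ b ∧
      x = a • ((1 : ℝ), (0 : ℝ)) + b • ((-1 : ℝ), ((n : ℝ) + 1))})
    (hExp : Expm = {v | v ∈ σ ∧ (∃ z₁ z₂ : ℤ, v = ((z₁ : ℝ), (z₂ : ℝ))) ∧ v ≠ 0})
    (hHull : Hullm = convexHull ℝ Expm) :
    volume (σ \ (s • Hullm ∪ (Expm + σ))) = ENNReal.ofReal (s ^ 2) := by
  have hσ' : σ = dualCone n := hσ.trans (cone_eq_dualCone (neg_one_lt_zero.trans_le n.cast_nonneg))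
  subst hHull hExp hσ'
  rw [← volume_dualCone_diff_newtonRegion (n := n) (by exact_mod_cast hn) h0.le,
    ← dualCone_diff_eq hn h0 h1]
  rfl
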